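/- Let (P_k)_{k≥0} be real polynomials with deg P_k = k and leading coefficient P_k[k] = 1/k!, and let G_n denote the Gregory coefficients. For n ≥ 1, the constant polynomial q_0^{[n]} := Δ P_{n+1} - Σ_{ℓ=0}^{n-1} G_ℓ Δ^ℓ D P_{n+1} equals G_n. -/

import Mathlib

open Polynomial Finset

/-- Forward difference operator on functions ℝ → ℝ. -/
noncomputable def fdiff (f : ℝ → ℝ) : ℝ → ℝ := fun x => f (x + 1) - f x

/-- Forward difference operator on real polynomials: (Δπ)(x) = π(x+1) - π(x). -/
noncomputable def polyDelta (p : Polynomial ℝ) : Polynomial ℝ := p.comp (X + 1) - p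

/-- Unsigned Stirling numbers of the first kind. -/
def stirling1 : ℕ → ℕ → ℕ
  | 0, 0 => 1
  | 0, _ + 1 => 0
  | _ + 1, 0 => 0
  | n + 1, m + 1 => n * stirling1 n (m + 1) + stirling1 n m

/-- Stirling numbers of the second kind, via the explicit formula. -/
noncomputable def stirling2 (n m : ℕ) : ℝ :=
  (1 / (m.factorial : ℝ)) *
    ∑ j ∈ Finset.range (m + 1), (m.choose j : ℝ) * (-1) ^ (m - j) * (j : ℝ) ^ n

/-- Gregory coefficients. -/
noncomputable def gregory (n : ℕ) : ℝ :=
  (1 / (n.factorial : ℝ)) *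
    ∑ j ∈ Finset.range (n + 1), (stirling1 n j : ℝ) * (-1) ^ (n - j) / ((j : ℝ) + 1)

lemma polyDelta_eval (p : Polynomial ℝ) (x : ℝ) :
    (polyDelta p).eval x = p.eval (x + 1) - p.eval x := by
  simp [polyDelta]

lemma polyDelta_zero : polyDelta 0 = 0 := by simp [polyDelta]

lemma polyDelta_C (c : ℝ) : polyDelta (C c) = 0 := by simp [polyDelta]

lemma coeff_comp_X_add_one (p : Polynomial ℝ) (m : ℕ) :
    (p.comp (X + 1)).coeff m
      = ∑ k ∈ Finset.range (p.natDegree + 1), p.coeff k * (k.choose m : ℝ) := by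
  conv_lhs => rw [p.as_sum_range' (p.natDegree + 1) (Nat.lt_succ_self _)]
  rw [Polynomial.sum_comp, finset_sum_coeff]
  refine Finset.sum_congr rfl fun k _ => ?_
  rw [monomial_comp, coeff_C_mul, coeff_X_add_one_pow]

lemma polyDelta_coeff (p : Polynomial ℝ) (m : ℕ) :
    (polyDelta p).coeff m
      = (∑ k ∈ Finset.range (p.natDegree + 1), p.coeff k * (k.choose m : ℝ)) - p.coeff m := by
  rw [polyDelta, coeff_sub, coeff_comp_X_add_one]

lemma natDegree_polyDelta_le (p : Polynomial ℝ) {m : ℕ} (h : p.natDegree ≤ m + 1) :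
    (polyDelta p).natDegree ≤ m := by
  rw [natDegree_le_iff_coeff_eq_zero]
  intro N hN
  rw [polyDelta_coeff]
  have hz : ∀ k ∈ Finset.range (p.natDegree + 1), k ≠ N → p.coeff k * (k.choose N : ℝ) = 0 := by
    intro k hk hkN
    have : k < N := lt_of_le_of_ne (by
      have := Finset.mem_range.mp hk; omega) hkN
    rw [Nat.choose_eq_zero_of_lt this]; simp
  by_cases hmem : N ∈ Finset.range (p.natDegree + 1)
  · rw [Finset.sum_eq_single_of_mem N hmem hz]; simp
  · rw [Finset.sum_eq_zero fun k hk => hz k hk (by rintro rfl; exact hmem hk)]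
    have : p.coeff N = 0 := coeff_eq_zero_of_natDegree_lt (by
      simp only [Finset.mem_range, not_lt] at hmem; omega)
    rw [this]; ring

lemma polyDelta_coeff_top (p : Polynomial ℝ) {m : ℕ} (h : p.natDegree ≤ m + 1) :
    (polyDelta p).coeff m = (m + 1 : ℝ) * p.coeff (m + 1) := by
  rw [polyDelta_coeff]
  have hext : ∑ k ∈ Finset.range (p.natDegree + 1), p.coeff k * (k.choose m : ℝ)
      = ∑ k ∈ Finset.range (m + 2), p.coeff k * (k.choose m : ℝ) := by
    refine Finset.sum_subset (Finset.range_subset_range.mpr (by omega)) fun k _ hk => ?_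
    have : p.natDegree < k := by
      simp only [Finset.mem_range, not_lt] at hk; omega
    rw [coeff_eq_zero_of_natDegree_lt this]; ring
  rw [hext, Finset.sum_range_succ, Finset.sum_range_succ]
  have hzero : ∑ k ∈ Finset.range m, p.coeff k * (k.choose m : ℝ) = 0 := by
    refine Finset.sum_eq_zero fun k hk => ?_
    rw [Nat.choose_eq_zero_of_lt (Finset.mem_range.mp hk)]; simp
  rw [hzero, Nat.choose_self, Nat.choose_succ_self_right]
  push_cast; ring

lemma iter_polyDelta_const (m : ℕ) : ∀ p : Polynomial ℝ, p.natDegree ≤ m →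
    polyDelta^[m] p = C ((m.factorial : ℝ) * p.coeff m) := by
  induction m with
  | zero =>
    intro p hp
    simpa using (eq_C_of_natDegree_le_zero hp)
  | succ m ih =>
    intro p hp
    rw [Function.iterate_succ_apply, ih (polyDelta p) (natDegree_polyDelta_le p hp),
      polyDelta_coeff_top p hp]
    push_cast [Nat.factorial_succ]
    ring_nf

lemma iter_polyDelta_zero (ℓ : ℕ) : polyDelta^[ℓ] 0 = 0 := by
  induction ℓ with
  | zero => rfl
  | succ ℓ ih => rw [Function.iterate_succ_apply, polyDelta_zero, ih]

lemma iter_polyDelta_eq_zero {p : Polynomial ℝ} {N : ℕ} (h : p.natDegree ≤ N)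
    {ℓ : ℕ} (hℓ : N < ℓ) : polyDelta^[ℓ] p = 0 := by
  obtain ⟨j, rfl⟩ := Nat.exists_eq_add_of_lt hℓ
  rw [show N + j + 1 = j + (N + 1) by ring, Function.iterate_add_apply,
    Function.iterate_succ_apply', iter_polyDelta_const N p h, polyDelta_C,
    iter_polyDelta_zero]

lemma shift_nat (p : Polynomial ℝ) (x : ℝ) : ∀ k : ℕ,
    p.eval (x + k) = ∑ ℓ ∈ Finset.range (k + 1), (k.choose ℓ : ℝ) * (polyDelta^[ℓ] p).eval x := by
  intro k
  induction k generalizing p with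
  | zero => simp
  | succ k ih =>
    have h1 : p.eval (x + (k + 1 : ℕ)) = (polyDelta p).eval (x + k) + p.eval (x + k) := by
      rw [polyDelta_eval]; push_cast; ring_nf
    rw [h1, ih (polyDelta p), ih p]
    have h2 : ∀ ℓ : ℕ, (polyDelta^[ℓ] (polyDelta p)) = polyDelta^[ℓ + 1] p := by
      intro ℓ; rw [Function.iterate_succ_apply]
    have h3 : ∑ ℓ ∈ Finset.range (k + 1), (k.choose ℓ : ℝ) * (polyDelta^[ℓ] (polyDelta p)).eval x
        = ∑ ℓ ∈ Finset.range (k + 1), (k.choose ℓ : ℝ) * (polyDelta^[ℓ + 1] p).eval x := by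
      refine Finset.sum_congr rfl fun ℓ _ => by rw [h2]
    rw [h3]
    rw [Finset.sum_range_succ' (fun ℓ => ((k+1).choose ℓ : ℝ) * (polyDelta^[ℓ] p).eval x)]
    have h4 : ∑ ℓ ∈ Finset.range (k + 1), ((k+1).choose (ℓ+1) : ℝ) * (polyDelta^[ℓ+1] p).eval x
        = ∑ ℓ ∈ Finset.range (k + 1), ((k.choose (ℓ+1) : ℝ) + (k.choose ℓ : ℝ))
            * (polyDelta^[ℓ+1] p).eval x := by
      refine Finset.sum_congr rfl fun ℓ _ => ?_
      rw [Nat.choose_succ_succ]; push_cast; ring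
    rw [h4]
    simp only [add_mul, Finset.sum_add_distrib]
    have h5 : ∑ ℓ ∈ Finset.range (k + 1), (k.choose (ℓ+1) : ℝ) * (polyDelta^[ℓ+1] p).eval x
        = ∑ ℓ ∈ Finset.range (k + 1), (k.choose ℓ : ℝ) * (polyDelta^[ℓ] p).eval x
          - (k.choose 0 : ℝ) * (polyDelta^[0] p).eval x := by
      rw [eq_sub_iff_add_eq, ← Finset.sum_range_succ' (fun ℓ => (k.choose ℓ : ℝ) * (polyDelta^[ℓ] p).eval x)]
      rw [Finset.sum_range_succ]
      simp [Nat.choose_succ_self]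
    rw [h5]
    simp only [Nat.choose_zero_right, Function.iterate_zero, id_eq, Nat.cast_one]
    ring


lemma stirling1_eq_zero : ∀ {n k : ℕ}, n < k → stirling1 n k = 0 := by
  intro n
  induction n with
  | zero => intro k hk; cases k with
    | zero => omega
    | succ k => rfl
  | succ n ih =>
    intro k hk
    cases k with
    | zero => omega
    | succ k =>
      show n * stirling1 n (k + 1) + stirling1 n k = 0
      rw [ih (by omega), ih (by omega)]
      ring

lemma stirling1_succ_zero (n : ℕ) : stirling1 (n + 1) 0 = 0 := rfl

lemma natCast_mul_stirling1_zero (n : ℕ) : (n : ℝ) * (stirling1 n 0 : ℝ) = 0 := by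
  cases n with
  | zero => simp
  | succ m => rw [stirling1_succ_zero]; simp

lemma asc_expand (ℓ : ℕ) :
    ascPochhammer ℝ ℓ = ∑ j ∈ Finset.range (ℓ + 1), C ((stirling1 ℓ j : ℝ)) * X ^ j := by
  induction ℓ with
  | zero =>
    rw [ascPochhammer_zero, Finset.sum_range_one]
    norm_num [show stirling1 0 0 = 1 from rfl]
  | succ n ih =>
    have hshift : ∑ j ∈ Finset.range (n + 1), C ((n : ℝ) * (stirling1 n (j+1) : ℝ)) * X ^ (j+1)
        = ∑ j ∈ Finset.range (n + 1), C ((n : ℝ) * (stirling1 n j : ℝ)) * X ^ j := by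
      have h1 := Finset.sum_range_succ' (fun j => C ((n : ℝ) * (stirling1 n j : ℝ)) * X ^ j) (n + 1)
      have h2 := Finset.sum_range_succ (fun j => C ((n : ℝ) * (stirling1 n j : ℝ)) * X ^ j) (n + 1)
      rw [h2] at h1
      rw [stirling1_eq_zero (show n < n + 1 by omega)] at h1
      rw [natCast_mul_stirling1_zero n] at h1
      simp only [Nat.cast_zero, mul_zero, map_zero, zero_mul, add_zero, pow_zero, mul_one] at h1
      simpa using h1.symm
    calc ascPochhammer ℝ (n + 1)
        = ascPochhammer ℝ n * (X + (n : ℝ[X])) := ascPochhammer_succ_right ℝ n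
      _ = (∑ j ∈ Finset.range (n+1), C ((stirling1 n j : ℝ)) * X ^ j) * X
          + C ((n:ℝ)) * ∑ j ∈ Finset.range (n+1), C ((stirling1 n j : ℝ)) * X ^ j := by
          rw [ih]; rw [show ((n : ℝ[X])) = C ((n:ℝ)) by simp]; ring
      _ = ∑ j ∈ Finset.range (n+1), C ((stirling1 n j : ℝ)) * X ^ (j+1)
          + ∑ j ∈ Finset.range (n+1), C ((n : ℝ) * (stirling1 n j : ℝ)) * X ^ j := by
          rw [Finset.sum_mul, Finset.mul_sum]
          congr 1
          · exact Finset.sum_congr rfl fun j _ => by ring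
          · exact Finset.sum_congr rfl fun j _ => by rw [map_mul]; ring
      _ = ∑ j ∈ Finset.range (n+1), C ((stirling1 n j : ℝ)) * X ^ (j+1)
          + ∑ j ∈ Finset.range (n+1), C ((n : ℝ) * (stirling1 n (j+1) : ℝ)) * X ^ (j+1) := by
          rw [hshift]
      _ = ∑ j ∈ Finset.range (n+1), C ((stirling1 (n+1) (j+1) : ℝ)) * X ^ (j+1) := by
          rw [← Finset.sum_add_distrib]
          refine Finset.sum_congr rfl fun j _ => ?_
          have : stirling1 (n+1) (j+1) = n * stirling1 n (j+1) + stirling1 n j := rfl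
          rw [this]; push_cast [map_add, map_mul]; ring
      _ = ∑ j ∈ Finset.range (n+2), C ((stirling1 (n+1) j : ℝ)) * X ^ j := by
          rw [Finset.sum_range_succ' (fun j => C ((stirling1 (n+1) j : ℝ)) * X ^ j) (n+1)]
          rw [stirling1_succ_zero]
          simp

lemma desc_eval (ℓ : ℕ) (u : ℝ) :
    (descPochhammer ℝ ℓ).eval u
      = ∑ j ∈ Finset.range (ℓ + 1), (stirling1 ℓ j : ℝ) * (-1) ^ (ℓ - j) * u ^ j := by
  have h1 : (ascPochhammer ℝ ℓ).eval (-u) = (-1) ^ ℓ * (descPochhammer ℝ ℓ).eval u :=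
    ascPochhammer_eval_neg_eq_descPochhammer ℝ u ℓ
  have h2 : (descPochhammer ℝ ℓ).eval u = (-1) ^ ℓ * (ascPochhammer ℝ ℓ).eval (-u) := by
    rw [h1, ← mul_assoc, ← mul_pow]
    norm_num
  rw [h2, asc_expand, eval_finset_sum, Finset.mul_sum]
  refine Finset.sum_congr rfl fun j hj => ?_
  have hj' : j ≤ ℓ := by have := Finset.mem_range.mp hj; omega
  have hsign : ((-1 : ℝ)) ^ ℓ * (-1) ^ j = (-1) ^ (ℓ - j) := by
    rw [← pow_add, show ℓ + j = (ℓ - j) + 2 * j by omega, pow_add, pow_mul]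
    norm_num
  simp only [eval_mul, eval_C, eval_pow, eval_X]
  rw [neg_pow, ← hsign]
  ring

lemma gregory_integral (ℓ : ℕ) :
    gregory ℓ = ∫ u in (0:ℝ)..1, (descPochhammer ℝ ℓ).eval u / (ℓ.factorial : ℝ) := by
  have hint : ∫ u in (0:ℝ)..1, (descPochhammer ℝ ℓ).eval u
      = ∑ j ∈ Finset.range (ℓ + 1), (stirling1 ℓ j : ℝ) * (-1) ^ (ℓ - j) / ((j : ℝ) + 1) := by
    rw [intervalIntegral.integral_congr
      (g := fun u => ∑ j ∈ Finset.range (ℓ + 1),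
        (stirling1 ℓ j : ℝ) * (-1) ^ (ℓ - j) * u ^ j)
      (fun u _ => desc_eval ℓ u)]
    rw [intervalIntegral.integral_finset_sum
      (f := fun j u => (stirling1 ℓ j : ℝ) * (-1) ^ (ℓ - j) * u ^ j) (fun j _ =>
      (((continuous_const.mul (continuous_pow j)) : Continuous
        fun u : ℝ => (stirling1 ℓ j : ℝ) * (-1) ^ (ℓ - j) * u ^ j).intervalIntegrable 0 1))]
    refine Finset.sum_congr rfl fun j _ => ?_
    rw [intervalIntegral.integral_const_mul, integral_pow]
    norm_num
    ring
  rw [show (fun u => (descPochhammer ℝ ℓ).eval u / (ℓ.factorial : ℝ))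
      = fun u => (ℓ.factorial : ℝ)⁻¹ * (descPochhammer ℝ ℓ).eval u from
    funext fun u => by ring]
  rw [intervalIntegral.integral_const_mul, hint, gregory]
  rw [one_div]

lemma newton (p : Polynomial ℝ) {N : ℕ} (h : p.natDegree ≤ N) (x u : ℝ) :
    p.eval (x + u) = ∑ ℓ ∈ Finset.range (N + 1),
      (descPochhammer ℝ ℓ).eval u / (ℓ.factorial : ℝ) * (polyDelta^[ℓ] p).eval x := by
  have key : p.comp (C x + X) = ∑ ℓ ∈ Finset.range (N + 1),
      C ((polyDelta^[ℓ] p).eval x / (ℓ.factorial : ℝ)) * descPochhammer ℝ ℓ := by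
    have hroots : ∀ k : ℕ, (p.comp (C x + X)).eval (k : ℝ)
        = (∑ ℓ ∈ Finset.range (N + 1),
          C ((polyDelta^[ℓ] p).eval x / (ℓ.factorial : ℝ)) * descPochhammer ℝ ℓ).eval (k : ℝ) := by
      intro k
      rw [eval_comp]
      simp only [eval_add, eval_C, eval_X]
      rw [shift_nat p x k, eval_finset_sum]
      have hterm : ∀ ℓ, (C ((polyDelta^[ℓ] p).eval x / (ℓ.factorial : ℝ))
            * descPochhammer ℝ ℓ).eval (k : ℝ)
          = (k.choose ℓ : ℝ) * (polyDelta^[ℓ] p).eval x := by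
        intro ℓ
        rw [eval_mul, eval_C, descPochhammer_eval_eq_descFactorial ℝ k ℓ,
          Nat.descFactorial_eq_factorial_mul_choose]
        have : (ℓ.factorial : ℝ) ≠ 0 := Nat.cast_ne_zero.mpr ℓ.factorial_ne_zero
        push_cast
        field_simp
      rw [Finset.sum_congr rfl fun ℓ _ => hterm ℓ]
      rw [show ∑ ℓ ∈ Finset.range (k + 1), (k.choose ℓ : ℝ) * (polyDelta^[ℓ] p).eval x
          = ∑ ℓ ∈ Finset.range (N + k + 2), (k.choose ℓ : ℝ) * (polyDelta^[ℓ] p).eval x from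
        Finset.sum_subset (Finset.range_subset_range.mpr (by omega)) fun ℓ _ hℓ => by
          rw [Nat.choose_eq_zero_of_lt (by
            simp only [Finset.mem_range, not_lt] at hℓ; omega)]
          simp]
      refine (Finset.sum_subset (Finset.range_subset_range.mpr (by omega)) fun ℓ _ hℓ => ?_).symm
      rw [iter_polyDelta_eq_zero h (by
        simp only [Finset.mem_range, not_lt] at hℓ; omega)]
      simp
    have hsub : p.comp (C x + X) - ∑ ℓ ∈ Finset.range (N + 1),
        C ((polyDelta^[ℓ] p).eval x / (ℓ.factorial : ℝ)) * descPochhammer ℝ ℓ = 0 := by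
      apply Polynomial.eq_zero_of_infinite_isRoot
      apply Set.Infinite.mono (s := Set.range (Nat.cast : ℕ → ℝ))
      · rintro y ⟨k, rfl⟩
        simp only [Set.mem_setOf_eq, IsRoot.def, eval_sub]
        rw [hroots k]
        ring
      · exact Set.infinite_range_of_injective Nat.cast_injective
    exact sub_eq_zero.mp hsub
  have := congrArg (Polynomial.eval u) key
  rw [eval_comp] at this
  simp only [eval_add, eval_C, eval_X] at this
  rw [this, eval_finset_sum]
  refine Finset.sum_congr rfl fun ℓ _ => ?_
  rw [eval_mul, eval_C]
  ring

lemma polyDelta_eq_sum (q : Polynomial ℝ) {N : ℕ} (h : (derivative q).natDegree ≤ N) :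
    polyDelta q = ∑ ℓ ∈ Finset.range (N + 1),
      gregory ℓ • polyDelta^[ℓ] (derivative q) := by
  apply Polynomial.funext
  intro x
  rw [polyDelta_eval, eval_finset_sum]
  have hftc : q.eval (x + 1) - q.eval x
      = ∫ u in (0:ℝ)..1, (derivative q).eval (x + u) := by
    have := intervalIntegral.integral_eq_sub_of_hasDerivAt
      (f := fun u : ℝ => q.eval (x + u))
      (f' := fun u : ℝ => (derivative q).eval (x + u))
      (a := (0:ℝ)) (b := 1)
      (fun u _ => by
        have h1 : HasDerivAt (fun u : ℝ => x + u) 1 u := by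
          simpa using (hasDerivAt_id u).const_add x
        have h2 := (q.hasDerivAt (x + u)).comp u h1
        simpa [Function.comp_def] using h2)
      (((q.derivative.continuous).comp
        (continuous_const.add continuous_id)).intervalIntegrable 0 1)
    rw [this]
    norm_num
  rw [hftc]
  rw [intervalIntegral.integral_congr
    (g := fun u => ∑ ℓ ∈ Finset.range (N + 1),
      (descPochhammer ℝ ℓ).eval u / (ℓ.factorial : ℝ) * (polyDelta^[ℓ] (derivative q)).eval x)
    (fun u _ => newton (derivative q) h x u)]
  rw [intervalIntegral.integral_finset_sum
    (f := fun ℓ u => (descPochhammer ℝ ℓ).eval u / (ℓ.factorial : ℝ)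
      * (polyDelta^[ℓ] (derivative q)).eval x) (fun ℓ _ =>
    ((((descPochhammer ℝ ℓ).continuous.div_const _).mul continuous_const).intervalIntegrable 0 1))]
  refine Finset.sum_congr rfl fun ℓ _ => ?_
  rw [intervalIntegral.integral_mul_const, ← gregory_integral]
  rw [Polynomial.smul_eq_C_mul, eval_mul, eval_C]

theorem q0n_eq_gregory (P : ℕ → Polynomial ℝ) (hdeg : ∀ k, (P k).natDegree = k)
    (hlead : ∀ k, (P k).coeff k = 1 / (k.factorial : ℝ)) (n : ℕ) (hn : 1 ≤ n) :
    polyDelta (P (n + 1))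
      - ∑ ℓ ∈ Finset.range n, gregory ℓ • polyDelta^[ℓ] (Polynomial.derivative (P (n + 1)))
      = Polynomial.C (gregory n) := by
  have hdd : (derivative (P (n+1))).natDegree ≤ n := by
    have h1 := Polynomial.natDegree_derivative_le (P (n+1))
    rw [hdeg] at h1
    omega
  rw [polyDelta_eq_sum (P (n+1)) hdd, Finset.sum_range_succ, add_sub_cancel_left]
  rw [iter_polyDelta_const n _ hdd]
  have hc : (derivative (P (n+1))).coeff n = 1 / (((n+1).factorial : ℝ)) * ((n:ℝ)+1) := by
    rw [Polynomial.coeff_derivative, hlead]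
  have hval : (n.factorial : ℝ) * (1 / (((n+1).factorial : ℝ)) * ((n:ℝ)+1)) = 1 := by
    have h2 : (n.factorial : ℝ) ≠ 0 := Nat.cast_ne_zero.mpr n.factorial_ne_zero
    have h3 : ((n:ℝ)+1) ≠ 0 := by positivity
    rw [Nat.factorial_succ]
    push_cast
    field_simp
  rw [hc, Polynomial.smul_C, hval, smul_eq_mul, mul_one]
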